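/- arXiv:2107.01133 — 9 statements merged into one kernel-verified Lean document; each statement's English description precedes it below -/
import Mathlib

section
/- Let a and b be two non-adjacent vertices of a graph G with more than k common neighbors. Then for any set F of at most k edges such that G−F is a disjoint union of 2-clubs, the vertices a and b lie in the same connected component of G−F. -/
def IsTwoClubCluster {V : Type*} (G : SimpleGraph V) : Prop :=
  ∀ u v : V, G.Reachable u v → G.dist u v ≤ 2

/-- two non-adjacent vertices with more than k common neighbors
stay in the same component after any solution of at most k deletions. -/
theorem common_neighbors_reachable {V : Type*} [Fintype V] [DecidableEq V]
    (G : SimpleGraph V) (k : ℕ) (a b : V) (hne : a ≠ b) (hnadj : ¬ G.Adj a b)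
    (hcn : k < {v : V | G.Adj a v ∧ G.Adj b v}.ncard)
    (F : Set (Sym2 V)) (hFcard : F.ncard ≤ k)
    (hF : IsTwoClubCluster (G.deleteEdges F)) :
    (G.deleteEdges F).Reachable a b := by
  have key : ∃ v : V, (G.Adj a v ∧ G.Adj b v) ∧ s(a,v) ∉ F ∧ s(b,v) ∉ F := by
    by_contra h
    push_neg at h
    classical
    set S : Set V := {v : V | G.Adj a v ∧ G.Adj b v} with hS
    have hmap : ∀ v ∈ S, (if s(a,v) ∈ F then s(a,v) else s(b,v)) ∈ F := by
      intro v hv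
      by_cases h1 : s(a,v) ∈ F
      · simp [h1]
      · simp [h1, h v hv h1]
    have hinj : Set.InjOn (fun v => if s(a,v) ∈ F then s(a,v) else s(b,v)) S := by
      intro v hv w hw hvw
      simp only at hvw
      have hva : v ≠ a := fun e => G.irrefl (e ▸ hv.1)
      have hvb : v ≠ b := fun e => G.irrefl (e ▸ hv.2)
      have hwa : w ≠ a := fun e => G.irrefl (e ▸ hw.1)
      have hwb : w ≠ b := fun e => G.irrefl (e ▸ hw.2)
      split_ifs at hvw with h1 h2 h2 <;>
      · rw [Sym2.eq_iff] at hvw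
        rcases hvw with ⟨_, rfl⟩ | ⟨rfl, rfl⟩ <;> first | rfl | simp_all
    have hle : S.ncard ≤ F.ncard :=
      Set.ncard_le_ncard_of_injOn _ hmap hinj (Set.toFinite F)
    omega
  obtain ⟨v, ⟨hav, hbv⟩, hafv, hbfv⟩ := key
  have h1 : (G.deleteEdges F).Adj a v := by
    rw [SimpleGraph.deleteEdges_adj]; exact ⟨hav, hafv⟩
  have h2 : (G.deleteEdges F).Adj v b := by
    rw [SimpleGraph.deleteEdges_adj]
    refine ⟨hbv.symm, ?_⟩
    rwa [Sym2.eq_swap]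
  exact h1.reachable.trans h2.reachable
end

section
/- Let a and b be two non-adjacent vertices of a graph G with more than k common neighbors, and let F be a set of at most k edges such that G−F is a disjoint union of 2-clubs. Then at least one common neighbor of a and b in G remains adjacent to both a and b in G−F, and hence dist_{G−F}(a,b) = 2. -/
namespace SimpleGraph

variable {V : Type*}

theorem ncard_le_ncard_of_forall_exists_edge_into {S A : Set V} {F : Set (Sym2 V)}
    (hF : F.Finite) (hSA : Disjoint S A) (hS : ∀ v ∈ S, ∃ c ∈ A, s(c, v) ∈ F) :
    S.ncard ≤ F.ncard := by
  choose! c hcA hcF using hS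
  refine Set.ncard_le_ncard_of_injOn (fun v => s(c v, v)) hcF (fun x hx y hy hxy => ?_) hF
  have hx_mem : x ∈ s(c y, y) := (show s(c x, x) = s(c y, y) from hxy) ▸ Sym2.mem_mk_right _ _
  rcases Sym2.mem_iff.1 hx_mem with rfl | rfl
  · exact (hSA.ne_of_mem hx (hcA y hy) rfl).elim
  · rfl

theorem exists_mem_commonNeighbors_deleteEdges [Finite V] (G : SimpleGraph V) {a b : V}
    {F : Set (Sym2 V)} (hF : F.ncard < (G.commonNeighbors a b).ncard) :
    ∃ w ∈ G.commonNeighbors a b, w ∈ (G.deleteEdges F).commonNeighbors a b := by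
  by_contra! hcut
  refine hF.not_ge (ncard_le_ncard_of_forall_exists_edge_into (A := {a, b}) (Set.toFinite F)
    (Set.disjoint_left.2 fun v ⟨hav, hbv⟩ hv => ?_) fun v hv => ?_)
  · rcases hv with rfl | rfl
    exacts [G.loopless.irrefl _ hav, G.loopless.irrefl _ hbv]
  · obtain ⟨hav, hbv⟩ := (G.mem_commonNeighbors).1 hv
    have hv' := hcut v hv
    simp only [mem_commonNeighbors, deleteEdges_adj, hav, hbv, true_and, not_and_or,
      not_not] at hv'
    rcases hv' with h | h
    exacts [⟨a, .inl rfl, h⟩, ⟨b, .inr rfl, h⟩]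

theorem dist_eq_two_of_mem_commonNeighbors (G : SimpleGraph V) {a b w : V} (hab : a ≠ b)
    (hnadj : ¬G.Adj a b) (hw : w ∈ G.commonNeighbors a b) : G.dist a b = 2 := by
  rw [dist, edist_eq_two_iff.2 ⟨hab, hnadj, w, hw⟩]
  rfl

end SimpleGraph

theorem common_neighbor_survives_general {V : Type*} [Fintype V]
    (G : SimpleGraph V) (k : ℕ) (a b : V) (hne : a ≠ b) (hnadj : ¬ G.Adj a b)
    (hcn : k < {v : V | G.Adj a v ∧ G.Adj b v}.ncard)
    (F : Set (Sym2 V)) (hFcard : F.ncard ≤ k) :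
    (∃ w : V, G.Adj a w ∧ G.Adj b w ∧
        (G.deleteEdges F).Adj a w ∧ (G.deleteEdges F).Adj b w) ∧
      (G.deleteEdges F).dist a b = 2 := by
  obtain ⟨w, ⟨haw, hbw⟩, hw⟩ :=
    G.exists_mem_commonNeighbors_deleteEdges (F := F) (hFcard.trans_lt hcn)
  exact ⟨⟨w, haw, hbw, hw⟩, (G.deleteEdges F).dist_eq_two_of_mem_commonNeighbors hne
    (fun h => hnadj (G.deleteEdges_le F h)) hw⟩

/-- with more than k common neighbors, some common neighbor
survives all k deletions, so the distance in G−F is exactly 2. -/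
theorem common_neighbor_survives {V : Type*} [Fintype V] [DecidableEq V]
    (G : SimpleGraph V) (k : ℕ) (a b : V) (hne : a ≠ b) (hnadj : ¬ G.Adj a b)
    (hcn : k < {v : V | G.Adj a v ∧ G.Adj b v}.ncard)
    (F : Set (Sym2 V)) (hFsub : F ⊆ G.edgeSet) (hFcard : F.ncard ≤ k)
    (hF : IsTwoClubCluster (G.deleteEdges F)) :
    (∃ w : V, G.Adj a w ∧ G.Adj b w ∧
        (G.deleteEdges F).Adj a w ∧ (G.deleteEdges F).Adj b w) ∧
      (G.deleteEdges F).dist a b = 2 :=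
  common_neighbor_survives_general G k a b hne hnadj hcn F hFcard
end

section
/- If a connected graph C is a cycle on n ≥ 6 vertices, then the minimum number of edge deletions needed to make every connected component have diameter at most 2 equals ⌈n/3⌉. -/
namespace MinDelCycle

open SimpleGraph

theorem emod (n x : ℕ) (hx : x < 2*n) :
    (x < n ∧ x % n = x) ∨ (n ≤ x ∧ x % n = x - n) := by
  rcases Nat.lt_or_ge x n with h|h
  · exact Or.inl ⟨h, Nat.mod_eq_of_lt h⟩
  · refine Or.inr ⟨h, ?_⟩
    rw [Nat.mod_eq_sub_mod h]
    exact Nat.mod_eq_of_lt (by omega)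

/-- vertex `i mod n` of `Fin n` -/
def vtx (n : ℕ) [NeZero n] (i : ℕ) : Fin n :=
  ⟨i % n, Nat.mod_lt _ (Nat.pos_of_ne_zero (NeZero.ne n))⟩

@[simp] lemma vtx_val {n : ℕ} [NeZero n] (i : ℕ) : (vtx n i).val = i % n := rfl

/-- edge from vertex `i` to `i+1` (mod n) -/
def ed (n : ℕ) [NeZero n] (i : ℕ) : Sym2 (Fin n) := s(vtx n i, vtx n (i+1))

lemma succ_mod (n : ℕ) (hn : 2 ≤ n) (j : ℕ) :
    (j+1) % n = j % n + 1 ∨ (j % n = n - 1 ∧ (j+1) % n = 0) := by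
  have hj : j % n < n := Nat.mod_lt _ (by omega)
  have h2 : (j+1) % n = (j % n + 1) % n := by
    conv_lhs => rw [Nat.add_mod, Nat.mod_eq_of_lt (show 1 < n by omega)]
  have := emod n (j % n + 1) (by omega)
  omega

lemma ed_mod {n : ℕ} [NeZero n] (hn : 6 ≤ n) (i : ℕ) : ed n i = ed n (i % n) := by
  have hp : 0 < n := Nat.pos_of_ne_zero (NeZero.ne n)
  have h1 : vtx n i = vtx n (i % n) :=
    Fin.ext (by simp only [vtx_val]; exact (Nat.mod_eq_of_lt (Nat.mod_lt _ hp)).symm)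
  have h2 : vtx n (i+1) = vtx n (i % n + 1) := by
    apply Fin.ext
    simp only [vtx_val]
    have := succ_mod n (by omega) i
    have hj : i % n < n := Nat.mod_lt _ hp
    have hb : (i+1) % n < n := Nat.mod_lt _ hp
    have := emod n (i % n + 1) (by omega)
    omega
  rw [ed, ed, h1, h2]

lemma ed_inj {n : ℕ} [NeZero n] (hn : 6 ≤ n) {i j : ℕ} (hi : i < n) (hj : j < n)
    (h : ed n i = ed n j) : i = j := by
  unfold ed vtx at h
  rw [Sym2.eq_iff] at h
  simp only [Fin.mk.injEq] at h
  have e1 := emod n (i+1) (by omega)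
  have e2 := emod n (j+1) (by omega)
  have m1 : i % n = i := Nat.mod_eq_of_lt hi
  have m2 : j % n = j := Nat.mod_eq_of_lt hj
  omega

lemma adj_iff {n : ℕ} (hn : 6 ≤ n) (u v : Fin n) :
    (cycleGraph n).Adj u v ↔
      (v.val = u.val + 1 ∨ u.val = v.val + 1 ∨
        (u.val = 0 ∧ v.val = n-1) ∨ (v.val = 0 ∧ u.val = n-1)) := by
  have hu := u.isLt
  have hv := v.isLt
  rw [cycleGraph_adj']
  simp only [Fin.sub_def]
  have e1 := emod n (n - v.val + u.val) (by omega)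
  have e2 := emod n (n - u.val + v.val) (by omega)
  omega

lemma short_walk {V : Type*} {G : SimpleGraph V} {u v : V} (p : G.Walk u v)
    (hp : p.length ≤ 2) : u = v ∨ G.Adj u v ∨ ∃ w, G.Adj u w ∧ G.Adj w v := by
  match p with
  | .nil => exact Or.inl rfl
  | .cons h .nil => exact Or.inr (Or.inl h)
  | .cons h (.cons h' .nil) => exact Or.inr (Or.inr ⟨_, h, h'⟩)
  | .cons h (.cons h' (.cons h'' q)) =>
    simp only [Walk.length_cons] at hp
    omega

/-! ### Upper bound construction -/

def cut (n a : ℕ) : ℕ := min (3*a+2) (n-1)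

lemma cut_lt {n : ℕ} (hn : 6 ≤ n) (a : ℕ) : cut n a < n := by unfold cut; omega

def Fd (n : ℕ) [NeZero n] : Finset (Sym2 (Fin n)) :=
  (Finset.range (1+(n-1)/3)).image (fun a => ed n (cut n a))

lemma card_Fd {n : ℕ} [NeZero n] (hn : 6 ≤ n) : (Fd n).card = 1+(n-1)/3 := by
  rw [Fd, Finset.card_image_of_injOn, Finset.card_range]
  intro a ha b hb h
  simp only [Finset.coe_range, Set.mem_Iio] at ha hb
  have := ed_inj hn (cut_lt hn a) (cut_lt hn b) h
  unfold cut at this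
  omega

lemma mem_Fd {n : ℕ} [NeZero n] {e : Sym2 (Fin n)} :
    e ∈ Fd n ↔ ∃ a < 1+(n-1)/3, e = ed n (cut n a) := by
  simp [Fd, eq_comm]

def blk (n : ℕ) (v : Fin n) : ℕ := min (v.val/3) ((n-1)/3)

lemma edge_eq {n : ℕ} [NeZero n] {u v : Fin n} (hv : v.val = u.val + 1) :
    s(u,v) = ed n u.val := by
  have h2 : u.val + 1 < n := hv ▸ v.isLt
  have e1 : vtx n u.val = u := Fin.ext (by simp only [vtx_val]; exact Nat.mod_eq_of_lt u.isLt)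
  have e2 : vtx n (u.val + 1) = v := Fin.ext (by simp only [vtx_val]; rw [Nat.mod_eq_of_lt h2]; omega)
  rw [ed, e1, e2]

lemma edge_wrap {n : ℕ} [NeZero n] (hn : 6 ≤ n) {u v : Fin n}
    (hu : u.val = n-1) (hv : v.val = 0) : s(u,v) = ed n (n-1) := by
  have e1 : vtx n (n-1) = u := Fin.ext (by simp only [vtx_val]; rw [Nat.mod_eq_of_lt (by omega)]; omega)
  have e2 : vtx n (n-1+1) = v := Fin.ext
    (by simp only [vtx_val]; rw [show n - 1 + 1 = n by omega, Nat.mod_self]; omega)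
  rw [ed, e1, e2]

lemma wrap_mem {n : ℕ} [NeZero n] (hn : 6 ≤ n) : ed n (n-1) ∈ Fd n := by
  rw [mem_Fd]
  exact ⟨(n-1)/3, by omega, by rw [show cut n ((n-1)/3) = n-1 by unfold cut; omega]⟩

lemma cut_mem {n : ℕ} [NeZero n] (hn : 6 ≤ n) {x : ℕ} (h2 : x % 3 = 2)
    (hk : x/3 < 1+(n-1)/3) (hx : x < n) : ed n x ∈ Fd n := by
  rw [mem_Fd]
  exact ⟨x/3, hk, by rw [show cut n (x/3) = x by unfold cut; omega]⟩

lemma blk_succ {n : ℕ} [NeZero n] (hn : 6 ≤ n) {u v : Fin n}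
    (hv : v.val = u.val + 1) (hne : s(u,v) ∉ (Fd n : Set (Sym2 (Fin n)))) :
    blk n u = blk n v := by
  have hu2 := u.isLt
  have hv2 := v.isLt
  by_cases hc : u.val % 3 = 2 ∧ u.val / 3 < 1+(n-1)/3
  · exfalso
    apply hne
    rw [edge_eq hv, Finset.mem_coe]
    exact cut_mem hn hc.1 hc.2 u.isLt
  · unfold blk; omega

lemma blk_adj {n : ℕ} [NeZero n] (hn : 6 ≤ n) {u v : Fin n}
    (h : ((cycleGraph n).deleteEdges (Fd n : Set (Sym2 (Fin n)))).Adj u v) :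
    blk n u = blk n v := by
  rw [SimpleGraph.deleteEdges_adj] at h
  obtain ⟨hadj, hmem⟩ := h
  rw [adj_iff hn] at hadj
  rcases hadj with h1 | h1 | ⟨h1, h2⟩ | ⟨h1, h2⟩
  · exact blk_succ hn h1 hmem
  · exact (blk_succ hn h1 (by rwa [Sym2.eq_swap])).symm
  · exfalso
    apply hmem
    rw [Sym2.eq_swap, edge_wrap hn h2 h1, Finset.mem_coe]
    exact wrap_mem hn
  · exfalso
    apply hmem
    rw [edge_wrap hn h2 h1, Finset.mem_coe]
    exact wrap_mem hn

lemma adj_succ {n : ℕ} [NeZero n] (hn : 6 ≤ n) {u v : Fin n} (hv : v.val = u.val + 1)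
    (hgood : ¬(u.val % 3 = 2 ∧ u.val/3 < 1+(n-1)/3)) :
    ((cycleGraph n).deleteEdges (Fd n : Set (Sym2 (Fin n)))).Adj u v := by
  rw [SimpleGraph.deleteEdges_adj]
  refine ⟨by rw [adj_iff hn]; exact Or.inl hv, ?_⟩
  rw [Finset.mem_coe, mem_Fd]
  rintro ⟨a, ha, he⟩
  rw [edge_eq hv] at he
  have hv2 := v.isLt
  have := ed_inj hn (cut_lt hn a) u.isLt he.symm
  unfold cut at this
  exact hgood (by omega)

lemma twoclub {n : ℕ} [NeZero n] (hn : 6 ≤ n) :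
    IsTwoClubCluster ((cycleGraph n).deleteEdges (Fd n : Set (Sym2 (Fin n)))) := by
  have key : ∀ u v : Fin n, blk n u = blk n v → u.val ≤ v.val →
      ((cycleGraph n).deleteEdges (Fd n : Set (Sym2 (Fin n)))).dist u v ≤ 2 := by
    intro u v hb hle
    have hu := u.isLt
    have hv := v.isLt
    have hcase : v.val = u.val ∨ v.val = u.val+1 ∨ v.val = u.val+2 := by
      unfold blk at hb; omega
    rcases hcase with h1 | h1 | h1
    · have : u = v := Fin.ext h1.symm
      subst this
      rw [SimpleGraph.dist_self]
      omega
    · have hadj := adj_succ hn h1 (by unfold blk at hb; omega)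
      exact le_trans (SimpleGraph.dist_le (Walk.cons hadj Walk.nil)) (by simp)
    · set w : Fin n := ⟨u.val+1, by omega⟩ with hwdef
      have hw : w.val = u.val + 1 := rfl
      have ha1 := adj_succ hn (v := w) hw (by unfold blk at hb; omega)
      have ha2 := adj_succ hn (u := w) (v := v) (by omega) (by unfold blk at hb; omega)
      exact le_trans (SimpleGraph.dist_le (Walk.cons ha1 (Walk.cons ha2 Walk.nil)))
        (by simp)
  intro u v hr
  have hb : blk n u = blk n v := by
    obtain ⟨p⟩ := hr
    induction p with
    | nil => rfl
    | cons h p ih => exact (blk_adj hn h).trans ih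
  rcases le_total u.val v.val with h|h
  · exact key u v hb h
  · rw [SimpleGraph.dist_comm]
    exact key v u hb.symm h

/-! ### Lower bound -/

lemma adj_vtx {n : ℕ} [NeZero n] (hn : 6 ≤ n) {F : Set (Sym2 (Fin n))} {j : ℕ}
    (h : ed n j ∉ F) :
    ((cycleGraph n).deleteEdges F).Adj (vtx n j) (vtx n (j+1)) := by
  rw [SimpleGraph.deleteEdges_adj]
  constructor
  · rw [adj_iff hn]
    simp only [vtx_val]
    rcases succ_mod n (by omega) j with h1 | ⟨h1, h2⟩
    · exact Or.inl h1
    · exact Or.inr (Or.inr (Or.inr ⟨h2, h1⟩))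
  · exact h

lemma lower {n : ℕ} (hn : 6 ≤ n) (F : Set (Sym2 (Fin n)))
    (hF : IsTwoClubCluster ((cycleGraph n).deleteEdges F)) :
    1+(n-1)/3 ≤ F.ncard := by
  haveI : NeZero n := ⟨by omega⟩
  classical
  have hpos : 0 < n := by omega
  -- Claim A: among any three consecutive edges, one is deleted
  have hA : ∀ i : ℕ, ed n i ∈ F ∨ ed n (i+1) ∈ F ∨ ed n (i+2) ∈ F := by
    intro i
    by_contra hc
    push_neg at hc
    obtain ⟨h0, h1, h2⟩ := hc
    have a1 := adj_vtx (F := F) hn h0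
    have a2 := adj_vtx (F := F) hn h1
    have a3 := adj_vtx (F := F) hn h2
    rw [show i+1+1 = i+2 by omega] at a2
    rw [show i+2+1 = i+3 by omega] at a3
    have hr : ((cycleGraph n).deleteEdges F).Reachable (vtx n i) (vtx n (i+3)) :=
      ⟨Walk.cons a1 (Walk.cons a2 (Walk.cons a3 Walk.nil))⟩
    have hd := hF _ _ hr
    obtain ⟨p, hp⟩ := hr.exists_walk_length_eq_dist
    have hlen : (p.mapLe (SimpleGraph.deleteEdges_le F)).length ≤ 2 := by
      simp only [SimpleGraph.Walk.mapLe, SimpleGraph.Walk.length_map]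
      omega
    have hsw := short_walk (p.mapLe (SimpleGraph.deleteEdges_le F)) hlen
    have s1 := succ_mod n (by omega) i
    have s2 := succ_mod n (by omega) (i+1)
    have s3 := succ_mod n (by omega) (i+2)
    rw [show i+1+1 = i+2 by omega] at s2
    rw [show i+2+1 = i+3 by omega] at s3
    have m0 : i % n < n := Nat.mod_lt _ hpos
    have m1 : (i+1) % n < n := Nat.mod_lt _ hpos
    have m2 : (i+2) % n < n := Nat.mod_lt _ hpos
    have m3 : (i+3) % n < n := Nat.mod_lt _ hpos
    rcases hsw with heq | hadj | ⟨w, hw1, hw2⟩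
    · have h5 : (vtx n i).val = (vtx n (i+3)).val := congrArg Fin.val heq
      simp only [vtx_val] at h5
      omega
    · rw [adj_iff hn] at hadj
      simp only [vtx_val] at hadj
      omega
    · rw [adj_iff hn] at hw1 hw2
      simp only [vtx_val] at hw1 hw2
      have hw := w.isLt
      omega
  -- the set of deleted cycle-edge positions
  set D : Finset (Fin n) := Finset.univ.filter (fun d => ed n d.val ∈ F) with hD
  have memD : ∀ d : Fin n, d ∈ D ↔ ed n d.val ∈ F := by
    intro d; simp [hD]
  -- covering argument : n ≤ 3 * D.card
  have cov : Finset.univ ⊆ D.biUnion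
      (fun d => ({d, vtx n (d.val + (n-1)), vtx n (d.val + (n-2))} : Finset (Fin n))) := by
    intro i _
    rw [Finset.mem_biUnion]
    have hi := i.isLt
    rcases hA i.val with h | h | h
    · exact ⟨i, (memD i).2 h, Finset.mem_insert_self _ _⟩
    · refine ⟨vtx n (i.val+1), (memD _).2 ?_, ?_⟩
      · show ed n ((i.val+1) % n) ∈ F
        rw [← ed_mod hn]; exact h
      · have key : vtx n ((vtx n (i.val+1)).val + (n-1)) = i := by
          apply Fin.ext
          simp only [vtx_val]
          have hs := succ_mod n (by omega) i.val
          have hm : (i.val+1) % n < n := Nat.mod_lt _ hpos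
          have hii : i.val % n = i.val := Nat.mod_eq_of_lt hi
          have he := emod n ((i.val+1) % n + (n-1)) (by omega)
          omega
        simp only [Finset.mem_insert, Finset.mem_singleton]
        exact Or.inr (Or.inl key.symm)
    · refine ⟨vtx n (i.val+2), (memD _).2 ?_, ?_⟩
      · show ed n ((i.val+2) % n) ∈ F
        rw [← ed_mod hn]; exact h
      · have key : vtx n ((vtx n (i.val+2)).val + (n-2)) = i := by
          apply Fin.ext
          simp only [vtx_val]
          have hs1 := succ_mod n (by omega) i.val
          have hs2 := succ_mod n (by omega) (i.val+1)
          rw [show i.val+1+1 = i.val+2 by omega] at hs2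
          have hm1 : (i.val+1) % n < n := Nat.mod_lt _ hpos
          have hm2 : (i.val+2) % n < n := Nat.mod_lt _ hpos
          have hii : i.val % n = i.val := Nat.mod_eq_of_lt hi
          have he := emod n ((i.val+2) % n + (n-2)) (by omega)
          omega
        simp only [Finset.mem_insert, Finset.mem_singleton]
        exact Or.inr (Or.inr key.symm)
  have h3 : ∀ d ∈ D, ({d, vtx n (d.val + (n-1)), vtx n (d.val + (n-2))} : Finset (Fin n)).card ≤ 3 := by
    intro d _
    calc ({d, vtx n (d.val + (n-1)), vtx n (d.val + (n-2))} : Finset (Fin n)).card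
        ≤ ({vtx n (d.val + (n-1)), vtx n (d.val + (n-2))} : Finset (Fin n)).card + 1 :=
          Finset.card_insert_le _ _
      _ ≤ (({vtx n (d.val + (n-2))} : Finset (Fin n)).card + 1) + 1 :=
          Nat.add_le_add_right (Finset.card_insert_le _ _) 1
      _ ≤ 3 := by rw [Finset.card_singleton]
  have hbu := Finset.card_biUnion_le_card_mul D _ 3 h3
  have hcards : n ≤ 3 * D.card := by
    have h1 := Finset.card_le_card cov
    rw [Finset.card_univ, Fintype.card_fin] at h1
    omega
  have hFfin : F.Finite := Set.toFinite F
  have hinj : Set.InjOn (fun d : Fin n => ed n d.val) ↑D := by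
    intro a _ b _ h
    exact Fin.ext (ed_inj hn a.isLt b.isLt h)
  have hle : D.card ≤ F.ncard := by
    rw [Set.ncard_eq_toFinset_card F hFfin]
    calc D.card = (D.image (fun d => ed n d.val)).card :=
          (Finset.card_image_of_injOn hinj).symm
      _ ≤ _ := Finset.card_le_card (by
          intro e he
          rw [Finset.mem_image] at he
          obtain ⟨d, hd, rfl⟩ := he
          rw [Set.Finite.mem_toFinset]
          exact (memD d).1 hd)
  omega

end MinDelCycle

/-- the cycle on n ≥ 6 vertices needs exactly
1 + ⌊(n−1)/3⌋ = ⌈n/3⌉ edge deletions. -/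
theorem minDeletions_cycleGraph (n : ℕ) (hn : 6 ≤ n) :
    sInf {m : ℕ | ∃ F : Set (Sym2 (Fin n)), F.ncard = m ∧
        IsTwoClubCluster ((SimpleGraph.cycleGraph n).deleteEdges F)} =
      1 + (n - 1) / 3 ∧ 1 + (n - 1) / 3 = (n + 2) / 3 := by
  refine ⟨?_, by omega⟩
  haveI : NeZero n := ⟨by omega⟩
  have hmem : (1 + (n-1)/3) ∈ {m : ℕ | ∃ F : Set (Sym2 (Fin n)), F.ncard = m ∧
      IsTwoClubCluster ((SimpleGraph.cycleGraph n).deleteEdges F)} := by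
    refine ⟨(MinDelCycle.Fd n : Set (Sym2 (Fin n))), ?_, MinDelCycle.twoclub hn⟩
    rw [Set.ncard_coe_finset]
    exact MinDelCycle.card_Fd hn
  refine le_antisymm (Nat.sInf_le hmem) (le_csInf ⟨_, hmem⟩ ?_)
  rintro m ⟨F, rfl, hF⟩
  exact MinDelCycle.lower hn F hF
end

section
/- Let G contain a 3-tail T = (a,b,c,d): d has degree 1, c has degree 2 with neighbors b and d, b has degree 2 with neighbors a and c, and a has degree at least 3. Then there is a minimum-size edge-deletion set F making G a disjoint union of 2-clubs such that ab ∈ F. -/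
private lemma short_walk_cases {V : Type*} {H : SimpleGraph V} {u v : V}
    (p : H.Walk u v) (hp : p.length ≤ 2) :
    u = v ∨ H.Adj u v ∨ ∃ x, H.Adj u x ∧ H.Adj x v := by
  cases p with
  | nil => exact Or.inl rfl
  | cons h q =>
    cases q with
    | nil => exact Or.inr (Or.inl h)
    | cons h' q' =>
      cases q' with
      | nil => exact Or.inr (Or.inr ⟨_, h, h'⟩)
      | cons h'' q'' => simp [SimpleGraph.Walk.length_cons] at hp

private lemma walk_transfer {V : Type*} {H H' : SimpleGraph V} {T : Set V}
    (hcl : ∀ x y, H.Adj x y → x ∈ T → y ∈ T)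
    (hadj : ∀ x y, x ∉ T → y ∉ T → H.Adj x y → H'.Adj x y)
    {u v : V} (p : H.Walk u v) (hu : u ∉ T) : H'.Reachable u v := by
  induction p with
  | nil => exact SimpleGraph.Reachable.refl _
  | @cons x y z h q ih =>
    have hy : y ∉ T := fun hyT => hu (hcl _ _ h.symm hyT)
    exact ((hadj _ _ hu hy h).reachable.trans (ih hy))

private lemma reach_stays {V : Type*} {H : SimpleGraph V} {T : Set V}
    (hcl : ∀ x y, H.Adj x y → x ∈ T → y ∈ T) {u v : V} (p : H.Walk u v)
    (hu : u ∈ T) : v ∈ T := by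
  induction p with
  | nil => exact hu
  | cons h _ ih => exact ih (hcl _ _ h hu)

/-- if G has a 3-tail (a,b,c,d), then some minimum deletion set
contains the edge ab. -/
theorem threeTail_optimal_solution_contains_ab {V : Type*} [Fintype V] [DecidableEq V]
    (G : SimpleGraph V) [DecidableRel G.Adj] (a b c d : V)
    (hab : G.Adj a b) (hbc : G.Adj b c) (hcd : G.Adj c d)
    (hnac : ¬ G.Adj a c) (hnad : ¬ G.Adj a d) (hnbd : ¬ G.Adj b d)
    (hdegd : G.degree d = 1) (hdegc : G.degree c = 2) (hdegb : G.degree b = 2)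
    (hdega : 3 ≤ G.degree a) :
    ∃ F : Set (Sym2 V), IsTwoClubCluster (G.deleteEdges F) ∧ s(a, b) ∈ F ∧
      ∀ F' : Set (Sym2 V), IsTwoClubCluster (G.deleteEdges F') →
        F.ncard ≤ F'.ncard := by
  classical
  -- distinctness
  have hab' : a ≠ b := hab.ne
  have hbc' : b ≠ c := hbc.ne
  have hcd' : c ≠ d := hcd.ne
  have hac : a ≠ c := fun h => by rw [h, hdegc] at hdega; omega
  have had : a ≠ d := fun h => by rw [h, hdegd] at hdega; omega
  have hbd : b ≠ d := fun h => by rw [h, hdegd] at hdegb; omega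
  -- neighbor characterizations
  have hNd : ∀ x, G.Adj d x → x = c := by
    intro x hx
    have hc : c ∈ G.neighborFinset d := by
      rw [SimpleGraph.mem_neighborFinset]; exact hcd.symm
    obtain ⟨y, hy⟩ := Finset.card_eq_one.mp
      (by rwa [SimpleGraph.card_neighborFinset_eq_degree] : (G.neighborFinset d).card = 1)
    rw [hy, Finset.mem_singleton] at hc
    have hx' : x ∈ G.neighborFinset d := by rwa [SimpleGraph.mem_neighborFinset]
    rw [hy, Finset.mem_singleton] at hx'
    rw [hx', ← hc]
  have hNc : ∀ x, G.Adj c x → x = b ∨ x = d := by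
    intro x hx
    have hsub : ({b, d} : Finset V) ⊆ G.neighborFinset c := by
      intro y hy
      rw [Finset.mem_insert, Finset.mem_singleton] at hy
      rw [SimpleGraph.mem_neighborFinset]
      rcases hy with rfl | rfl
      · exact hbc.symm
      · exact hcd
    have hcard : (G.neighborFinset c).card ≤ ({b, d} : Finset V).card := by
      rw [SimpleGraph.card_neighborFinset_eq_degree, hdegc, Finset.card_insert_of_notMem
        (by simpa using hbd), Finset.card_singleton]
    have heq := Finset.eq_of_subset_of_card_le hsub hcard
    have hx' : x ∈ G.neighborFinset c := by rwa [SimpleGraph.mem_neighborFinset]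
    rw [← heq, Finset.mem_insert, Finset.mem_singleton] at hx'
    exact hx'
  have hNb : ∀ x, G.Adj b x → x = a ∨ x = c := by
    intro x hx
    have hsub : ({a, c} : Finset V) ⊆ G.neighborFinset b := by
      intro y hy
      rw [Finset.mem_insert, Finset.mem_singleton] at hy
      rw [SimpleGraph.mem_neighborFinset]
      rcases hy with rfl | rfl
      · exact hab.symm
      · exact hbc
    have hcard : (G.neighborFinset b).card ≤ ({a, c} : Finset V).card := by
      rw [SimpleGraph.card_neighborFinset_eq_degree, hdegb, Finset.card_insert_of_notMem
        (by simpa using hac), Finset.card_singleton]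
    have heq := Finset.eq_of_subset_of_card_le hsub hcard
    have hx' : x ∈ G.neighborFinset b := by rwa [SimpleGraph.mem_neighborFinset]
    rw [← heq, Finset.mem_insert, Finset.mem_singleton] at hx'
    exact hx'
  -- every solution contains one of the three tail edges
  have hkey : ∀ F' : Set (Sym2 V), IsTwoClubCluster (G.deleteEdges F') →
      s(a,b) ∈ F' ∨ s(b,c) ∈ F' ∨ s(c,d) ∈ F' := by
    intro F' hsol
    by_contra h
    push_neg at h
    obtain ⟨h1, h2, h3⟩ := h
    have e1 : (G.deleteEdges F').Adj a b := by
      rw [SimpleGraph.deleteEdges_adj]; exact ⟨hab, h1⟩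
    have e2 : (G.deleteEdges F').Adj b c := by
      rw [SimpleGraph.deleteEdges_adj]; exact ⟨hbc, h2⟩
    have e3 : (G.deleteEdges F').Adj c d := by
      rw [SimpleGraph.deleteEdges_adj]; exact ⟨hcd, h3⟩
    have hr : (G.deleteEdges F').Reachable a d :=
      ⟨.cons e1 (.cons e2 (.cons e3 .nil))⟩
    have hdist := hsol a d hr
    obtain ⟨p, hp⟩ := hr.exists_walk_length_eq_dist
    rcases short_walk_cases p (by omega) with h | h | ⟨x, hux, hxd⟩
    · exact had h
    · exact hnad ((SimpleGraph.deleteEdges_adj.mp h).1)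
    · have hx : x = c := hNd x ((SimpleGraph.deleteEdges_adj.mp hxd).1.symm)
      subst hx
      exact hnac ((SimpleGraph.deleteEdges_adj.mp hux).1)
  -- there is some solution
  have hexist : ∃ n, ∃ F' : Set (Sym2 V),
      IsTwoClubCluster (G.deleteEdges F') ∧ F'.ncard = n := by
    refine ⟨_, Set.univ, ?_, rfl⟩
    intro u v hr
    obtain ⟨p⟩ := hr
    cases p with
    | nil => simp [SimpleGraph.dist_self]
    | cons h q => exact absurd (Set.mem_univ _) (SimpleGraph.deleteEdges_adj.mp h).2
  obtain ⟨F', hsol', hcard'⟩ := Nat.find_spec hexist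
  have hmin : ∀ F'' : Set (Sym2 V), IsTwoClubCluster (G.deleteEdges F'') →
      Nat.find hexist ≤ F''.ncard := fun F'' h'' => Nat.find_le ⟨F'', h'', rfl⟩
  -- the exchange
  set S : Set (Sym2 V) := {s(a,b), s(b,c), s(c,d)} with hS
  set F : Set (Sym2 V) := insert s(a,b) (F' \ S) with hFdef
  -- Sym2 equalities
  have sbc_ne : s(b,c) ≠ s(a,b) := by
    intro h
    rw [Sym2.eq_iff] at h
    rcases h with ⟨h1, h2⟩ | ⟨h1, h2⟩
    · exact hab' h1.symm
    · exact hac h2.symm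
  have scd_ne : s(c,d) ≠ s(a,b) := by
    intro h
    rw [Sym2.eq_iff] at h
    rcases h with ⟨h1, h2⟩ | ⟨h1, h2⟩
    · exact hac h1.symm
    · exact had h2.symm
  have habF : s(a,b) ∈ F := Set.mem_insert _ _
  have hbcF : s(b,c) ∉ F := by
    intro h
    rcases h with h | h
    · exact sbc_ne h
    · exact h.2 (by simp [hS])
  have hcdF : s(c,d) ∉ F := by
    intro h
    rcases h with h | h
    · exact scd_ne h
    · exact h.2 (by simp [hS])
  have hFle : ∀ e, e ∈ F → e = s(a,b) ∨ e ∈ F' := by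
    intro e he
    rcases he with h | h
    · exact Or.inl h
    · exact Or.inr h.1
  -- F'-edges outside S are in F
  have hF'F : ∀ e, e ∈ F' → e ∉ S → e ∈ F := fun e he heS => Set.mem_insert_of_mem _ ⟨he, heS⟩
  set H : SimpleGraph V := G.deleteEdges F with hH
  set H' : SimpleGraph V := G.deleteEdges F' with hH'
  set T : Set V := {b, c, d} with hT
  have hbT : b ∈ T := by simp [hT]
  have hcT : c ∈ T := by simp [hT]
  have hdT : d ∈ T := by simp [hT]
  have haT : a ∉ T := by simp [hT, hab', hac, had]
  -- closure of T under H-adjacency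
  have hcl : ∀ x y, H.Adj x y → x ∈ T → y ∈ T := by
    intro x y hxy hx
    have hG : G.Adj x y := (SimpleGraph.deleteEdges_adj.mp hxy).1
    have hnF : s(x,y) ∉ F := (SimpleGraph.deleteEdges_adj.mp hxy).2
    rcases hx with rfl | rfl | rfl
    · rcases hNb y hG with rfl | rfl
      · exact absurd (by rwa [Sym2.eq_swap] at habF : s(x,y) ∈ F) hnF
      · exact hcT
    · rcases hNc y hG with rfl | rfl
      · exact hbT
      · exact hdT
    · rw [hNd y hG]; exact hcT
  have hclR : ∀ u v : V, H.Reachable u v → u ∈ T → v ∈ T := by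
    intro u v hr hu
    obtain ⟨p⟩ := hr
    exact reach_stays hcl p hu
  -- H and H' agree outside T
  have hSinc : ∀ x y : V, x ∉ T → y ∉ T → s(x,y) ∉ S := by
    intro x y hx hy h
    simp only [hS, Set.mem_insert_iff, Set.mem_singleton_iff, Sym2.eq_iff] at h
    rcases h with (⟨h1, h2⟩ | ⟨h1, h2⟩) | (⟨h1, h2⟩ | ⟨h1, h2⟩) | (⟨h1, h2⟩ | ⟨h1, h2⟩)
    · exact hy (by rw [h2]; exact hbT)
    · exact hx (by rw [h1]; exact hbT)
    · exact hx (by rw [h1]; exact hbT)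
    · exact hx (by rw [h1]; exact hcT)
    · exact hx (by rw [h1]; exact hcT)
    · exact hx (by rw [h1]; exact hdT)
  have hHH' : ∀ x y : V, x ∉ T → y ∉ T → (H.Adj x y ↔ H'.Adj x y) := by
    intro x y hx hy
    have hnS := hSinc x y hx hy
    have hnab : s(x,y) ≠ s(a,b) := fun h => hnS (by rw [h]; simp [hS])
    rw [hH, hH', SimpleGraph.deleteEdges_adj, SimpleGraph.deleteEdges_adj]
    constructor
    · rintro ⟨hG, hnF⟩
      exact ⟨hG, fun hF' => hnF (hF'F _ hF' hnS)⟩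
    · rintro ⟨hG, hnF'⟩
      refine ⟨hG, fun hF => ?_⟩
      rcases hFle _ hF with h | h
      · exact hnab h
      · exact hnF' h
  -- H-edges in H
  have hbcH : H.Adj b c := SimpleGraph.deleteEdges_adj.mpr ⟨hbc, hbcF⟩
  have hcdH : H.Adj c d := SimpleGraph.deleteEdges_adj.mpr ⟨hcd, hcdF⟩
  refine ⟨F, ?_, habF, ?_⟩
  · -- H is a 2-club cluster
    intro u v hr
    by_cases huv : u = v
    · subst huv; simp [SimpleGraph.dist_self]
    by_cases huT : u ∈ T
    · have hvT : v ∈ T := hclR u v hr huT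
      -- walks of length ≤ 2 inside {b,c,d}
      rcases huT with rfl | rfl | rfl <;> rcases hvT with rfl | rfl | rfl
      · exact absurd rfl huv
      · exact le_trans (SimpleGraph.dist_le hbcH.toWalk) (by simp)
      · exact le_trans (SimpleGraph.dist_le (SimpleGraph.Walk.cons hbcH hcdH.toWalk)) (by simp)
      · exact le_trans (SimpleGraph.dist_le hbcH.symm.toWalk) (by simp)
      · exact absurd rfl huv
      · exact le_trans (SimpleGraph.dist_le hcdH.toWalk) (by simp)
      · exact le_trans (SimpleGraph.dist_le
          (SimpleGraph.Walk.cons hcdH.symm hbcH.symm.toWalk)) (by simp)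
      · exact le_trans (SimpleGraph.dist_le hcdH.symm.toWalk) (by simp)
      · exact absurd rfl huv
    · have hvT : v ∉ T := fun hv => huT (hclR v u hr.symm hv)
      -- transfer the walk to H'
      have hr' : H'.Reachable u v := by
        obtain ⟨p⟩ := hr
        exact walk_transfer hcl (fun x y hx hy h => (hHH' x y hx hy).mp h) p huT
      have hd' := hsol' u v hr'
      obtain ⟨p, hp⟩ := hr'.exists_walk_length_eq_dist
      rcases short_walk_cases p (by omega) with h | h | ⟨x, hux, hxv⟩
      · exact absurd h huv
      · exact le_trans (SimpleGraph.dist_le (((hHH' u v huT hvT).mpr h).toWalk)) (by simp)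
      · have hxT : x ∉ T := by
          intro hx
          have hGux : G.Adj x u := (SimpleGraph.deleteEdges_adj.mp hux).1.symm
          have hGxv : G.Adj x v := (SimpleGraph.deleteEdges_adj.mp hxv).1
          rcases hx with rfl | rfl | rfl
          · rcases hNb u hGux with rfl | rfl
            · rcases hNb v hGxv with rfl | rfl
              · exact huv rfl
              · exact hvT hcT
            · exact huT hcT
          · rcases hNc u hGux with rfl | rfl
            · exact huT hbT
            · exact huT hdT
          · rw [hNd u hGux] at huT; exact huT hcT
        have h1 : H.Adj u x := (hHH' u x huT hxT).mpr hux
        have h2 : H.Adj x v := (hHH' x v hxT hvT).mpr hxv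
        exact le_trans (SimpleGraph.dist_le (SimpleGraph.Walk.cons h1 h2.toWalk)) (by simp)
  · -- minimality
    intro F'' hsol''
    have hF'min : F'.ncard ≤ F''.ncard := by
      rw [hcard']; exact hmin F'' hsol''
    -- F.ncard ≤ F'.ncard
    have hEx : ∃ e, e ∈ F' ∧ e ∈ S := by
      rcases hkey F' hsol' with h | h | h
      · exact ⟨_, h, by simp [hS]⟩
      · exact ⟨_, h, by simp [hS]⟩
      · exact ⟨_, h, by simp [hS]⟩
    obtain ⟨e, heF', heS⟩ := hEx
    have hss : F' \ S ⊂ F' := by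
      constructor
      · exact Set.diff_subset
      · intro hsub
        exact (hsub heF').2 heS
    have h1 : (F' \ S).ncard < F'.ncard := Set.ncard_lt_ncard hss (Set.toFinite _)
    have h2 : F.ncard ≤ (F' \ S).ncard + 1 := Set.ncard_insert_le _ _
    omega
end

section
/- Let G contain a 3-tail T = (a,b,c,d) as above, and suppose (G,k) is a yes-instance of 2-Club Cluster Edge Deletion (some F with |F| ≤ k makes G−F a disjoint union of 2-clubs). Then (G − {ab}, k−1) is also a yes-instance. -/
lemma threeTail_main_aux {V : Type*} [Fintype V] [DecidableEq V]
    (G : SimpleGraph V) (a b c d : V) (F : Set (Sym2 V)) (e : Sym2 V)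
    (hNb : ∀ x, G.Adj b x → x = a ∨ x = c)
    (hNc : ∀ x, G.Adj c x → x = b ∨ x = d)
    (hNd : ∀ x, G.Adj d x → x = c)
    (heF : e ∈ F) (he : e = s(b,c) ∨ e = s(c,d))
    (hF : IsTwoClubCluster (G.deleteEdges F)) :
    IsTwoClubCluster ((G.deleteEdges {s(a,b)}).deleteEdges (F \ {e})) := by
  set H := (G.deleteEdges {s(a,b)}).deleteEdges (F \ {e}) with hH
  have hHadj : ∀ x y : V, H.Adj x y ↔ G.Adj x y ∧ s(x,y) ∉ ({s(a,b)} : Set (Sym2 V)) ∧ s(x,y) ∉ F \ {e} := by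
    intro x y
    rw [hH, SimpleGraph.deleteEdges_adj, SimpleGraph.deleteEdges_adj]
    tauto
  -- S = {b,c,d} is closed under H-adjacency
  have hSb : ∀ x, H.Adj b x → x = c := by
    intro x hx
    rw [hHadj] at hx
    rcases hNb x hx.1 with h | h
    · exfalso
      apply hx.2.1
      rw [h, Sym2.eq_swap]
      rfl
    · exact h
  have hSc : ∀ x, H.Adj c x → x = b ∨ x = d := fun x hx => hNc x ((hHadj c x).mp hx).1
  have hSd : ∀ x, H.Adj d x → x = c := fun x hx => hNd x ((hHadj d x).mp hx).1
  have hClosed : ∀ u v : V, (u = b ∨ u = c ∨ u = d) → H.Adj u v → (v = b ∨ v = c ∨ v = d) := by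
    rintro u v (rfl | rfl | rfl) h
    · exact Or.inr (Or.inl (hSb v h))
    · rcases hSc v h with h' | h'
      · exact Or.inl h'
      · exact Or.inr (Or.inr h')
    · exact Or.inr (Or.inl (hSd v h))
  -- support of walks starting in S stays in S
  have hSupS : ∀ (u v : V) (p : H.Walk u v), (u = b ∨ u = c ∨ u = d) →
      ∀ w ∈ p.support, (w = b ∨ w = c ∨ w = d) := by
    intro u v p
    induction p with
    | nil => intro hu w hw; rw [SimpleGraph.Walk.support_nil] at hw; simp at hw; subst hw; exact hu
    | cons h q ih =>
      intro hu w hw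
      rw [SimpleGraph.Walk.support_cons] at hw
      rcases List.mem_cons.mp hw with rfl | hw'
      · exact hu
      · exact ih (hClosed _ _ hu h) w hw'
  -- support of walks starting outside S stays outside S
  have hSupNS : ∀ (u v : V) (p : H.Walk u v), ¬(u = b ∨ u = c ∨ u = d) →
      ∀ w ∈ p.support, ¬(w = b ∨ w = c ∨ w = d) := by
    intro u v p
    induction p with
    | nil => intro hu w hw; rw [SimpleGraph.Walk.support_nil] at hw; simp at hw; subst hw; exact hu
    | cons h q ih =>
      intro hu w hw
      rename_i x y z
      have hy : ¬(y = b ∨ y = c ∨ y = d) := by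
        intro hy
        exact hu (hClosed _ _ hy h.symm)
      rw [SimpleGraph.Walk.support_cons] at hw
      rcases List.mem_cons.mp hw with rfl | hw'
      · exact hu
      · exact ih hy w hw'
  -- edges between vertices outside S transfer between H and G−F
  have hedge1 : ∀ x y : V, ¬(x = b ∨ x = c ∨ x = d) → ¬(y = b ∨ y = c ∨ y = d) →
      H.Adj x y → (G.deleteEdges F).Adj x y := by
    intro x y hx hy hxy
    rw [hHadj] at hxy
    rw [SimpleGraph.deleteEdges_adj]
    refine ⟨hxy.1, fun hmem => ?_⟩
    have : s(x,y) = e := by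
      by_contra hne
      exact hxy.2.2 ⟨hmem, hne⟩
    rcases he with rfl | rfl
    · rw [Sym2.eq_iff] at this; tauto
    · rw [Sym2.eq_iff] at this; tauto
  have hedge2 : ∀ x y : V, ¬(x = b ∨ x = c ∨ x = d) → ¬(y = b ∨ y = c ∨ y = d) →
      (G.deleteEdges F).Adj x y → H.Adj x y := by
    intro x y hx hy hxy
    rw [SimpleGraph.deleteEdges_adj] at hxy
    rw [hHadj]
    refine ⟨hxy.1, ?_, fun hmem => hxy.2 hmem.1⟩
    intro hmem
    have : s(x,y) = s(a,b) := hmem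
    rw [Sym2.eq_iff] at this
    tauto
  -- transfer reachability H → G−F for walks avoiding S
  have htrans : ∀ (u v : V) (p : H.Walk u v), (∀ w ∈ p.support, ¬(w = b ∨ w = c ∨ w = d)) →
      (G.deleteEdges F).Reachable u v := by
    intro u v p
    induction p with
    | nil => intro _; rfl
    | cons h q ih =>
      intro hsup
      rename_i x y z
      have hx : ¬(x = b ∨ x = c ∨ x = d) := hsup x (by simp [SimpleGraph.Walk.support_cons])
      have hy : ¬(y = b ∨ y = c ∨ y = d) := by
        apply hsup y
        rw [SimpleGraph.Walk.support_cons]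
        exact List.mem_cons_of_mem _ q.start_mem_support
      exact (hedge1 x y hx hy h).reachable.trans
        (ih (fun w hw => hsup w (by rw [SimpleGraph.Walk.support_cons]; exact List.mem_cons_of_mem _ hw)))
  intro u v hreach
  by_cases hu : u = b ∨ u = c ∨ u = d
  · -- u in S : walk stays in {b,c,d}, bypass path has ≤ 3 vertices
    obtain ⟨p⟩ := hreach
    have hnodup := p.bypass_isPath.support_nodup
    have hsub : ∀ w ∈ p.bypass.support, w = b ∨ w = c ∨ w = d := by
      intro w hw
      exact hSupS u v p hu w (p.support_bypass_subset hw)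
    have hsubF : p.bypass.support.toFinset ⊆ ({b, c, d} : Finset V) := by
      intro w hw
      rw [List.mem_toFinset] at hw
      rcases hsub w hw with rfl | rfl | rfl <;> simp
    have hcard : p.bypass.support.toFinset.card ≤ 3 := by
      apply (Finset.card_le_card hsubF).trans
      apply (Finset.card_insert_le _ _).trans
      have : ({c, d} : Finset V).card ≤ 2 := by
        apply (Finset.card_insert_le _ _).trans
        simp
      omega
    rw [List.toFinset_card_of_nodup hnodup, SimpleGraph.Walk.length_support] at hcard
    calc H.dist u v ≤ p.bypass.length := SimpleGraph.dist_le _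
      _ ≤ 2 := by omega
  · by_cases hv : v = b ∨ v = c ∨ v = d
    · -- impossible: v in S reaches u outside S
      exfalso
      obtain ⟨p⟩ := hreach.symm
      exact hu (hSupS v u p hv u p.end_mem_support)
    · -- both outside S
      obtain ⟨p⟩ := hreach
      have hreach' : (G.deleteEdges F).Reachable u v := htrans u v p (hSupNS u v p hu)
      have hd := hF u v hreach'
      obtain ⟨q, hq⟩ := hreach'.exists_walk_length_eq_dist
      match q, hq with
      | SimpleGraph.Walk.nil, hq =>
        simp [SimpleGraph.dist_self]
      | SimpleGraph.Walk.cons h SimpleGraph.Walk.nil, hq =>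
        have : H.Adj u v := hedge2 u v hu hv h
        calc H.dist u v ≤ (SimpleGraph.Walk.cons this SimpleGraph.Walk.nil).length :=
            SimpleGraph.dist_le _
          _ ≤ 2 := by simp
      | SimpleGraph.Walk.cons (v := w) h (SimpleGraph.Walk.cons h' SimpleGraph.Walk.nil), hq =>
        -- two-edge walk u - w - v realizing dist = 2
        have huv : u ≠ v := by
          rintro rfl
          rw [SimpleGraph.dist_self] at hq
          simp at hq
        have hw : ¬(w = b ∨ w = c ∨ w = d) := by
          have hGuw : G.Adj u w := (SimpleGraph.deleteEdges_adj.mp h).1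
          have hGwv : G.Adj w v := (SimpleGraph.deleteEdges_adj.mp h').1
          rintro (rfl | rfl | rfl)
          · rcases hNb u hGuw.symm with rfl | rfl
            · rcases hNb v hGwv with rfl | rfl
              · exact huv rfl
              · exact hv (Or.inr (Or.inl rfl))
            · exact hu (Or.inr (Or.inl rfl))
          · rcases hNc u hGuw.symm with rfl | rfl
            · exact hu (Or.inl rfl)
            · exact hu (Or.inr (Or.inr rfl))
          · have := hNd u hGuw.symm
            exact hu (Or.inr (Or.inl this))
        have e1 : H.Adj u w := hedge2 u w hu hw h
        have e2 : H.Adj w v := hedge2 w v hw hv h'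
        calc H.dist u v ≤ (SimpleGraph.Walk.cons e1 (SimpleGraph.Walk.cons e2 SimpleGraph.Walk.nil)).length :=
            SimpleGraph.dist_le _
          _ ≤ 2 := by simp
      | SimpleGraph.Walk.cons h (SimpleGraph.Walk.cons h' (SimpleGraph.Walk.cons h'' q')), hq =>
        exfalso
        rw [SimpleGraph.Walk.length_cons, SimpleGraph.Walk.length_cons,
          SimpleGraph.Walk.length_cons] at hq
        omega

/-- if (G,k) is a yes-instance and G has a 3-tail (a,b,c,d),
then (G − ab, k−1) is a yes-instance. -/
theorem threeTail_reduction {V : Type*} [Fintype V] [DecidableEq V]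
    (G : SimpleGraph V) [DecidableRel G.Adj] (a b c d : V) (k : ℕ)
    (hab : G.Adj a b) (hbc : G.Adj b c) (hcd : G.Adj c d)
    (hnac : ¬ G.Adj a c) (hnad : ¬ G.Adj a d) (hnbd : ¬ G.Adj b d)
    (hdegd : G.degree d = 1) (hdegc : G.degree c = 2) (hdegb : G.degree b = 2)
    (hyes : ∃ F : Set (Sym2 V), F.ncard ≤ k ∧ IsTwoClubCluster (G.deleteEdges F)) :
    ∃ F' : Set (Sym2 V), F'.ncard ≤ k - 1 ∧
      IsTwoClubCluster ((G.deleteEdges {s(a, b)}).deleteEdges F') := by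
  obtain ⟨F, hcard, hclub⟩ := hyes
  -- distinctness
  have hbd : b ≠ d := by rintro rfl; exact hnad hab
  have hac : a ≠ c := by rintro rfl; exact hnad hcd
  have had : a ≠ d := by rintro rfl; exact hnac hcd.symm
  -- neighborhood facts
  have hNd : ∀ x, G.Adj d x → x = c := by
    obtain ⟨y, hy⟩ := Finset.card_eq_one.mp hdegd
    intro x hx
    have hx' : x ∈ G.neighborFinset d := by rwa [SimpleGraph.mem_neighborFinset]
    have hc' : c ∈ G.neighborFinset d := by rw [SimpleGraph.mem_neighborFinset]; exact hcd.symm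
    rw [hy, Finset.mem_singleton] at hx' hc'
    rw [hx', hc']
  have hNc : ∀ x, G.Adj c x → x = b ∨ x = d := by
    have hsub : ({b, d} : Finset V) ⊆ G.neighborFinset c := by
      intro x hx
      rw [Finset.mem_insert, Finset.mem_singleton] at hx
      rcases hx with rfl | rfl
      · rw [SimpleGraph.mem_neighborFinset]; exact hbc.symm
      · rw [SimpleGraph.mem_neighborFinset]; exact hcd
    have hle : (G.neighborFinset c).card ≤ ({b, d} : Finset V).card := by
      rw [Finset.card_insert_of_notMem (by simpa using hbd), Finset.card_singleton]
      exact le_of_eq hdegc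
    have := Finset.eq_of_subset_of_card_le hsub hle
    intro x hx
    have hx' : x ∈ G.neighborFinset c := by rwa [SimpleGraph.mem_neighborFinset]
    rw [← this, Finset.mem_insert, Finset.mem_singleton] at hx'
    exact hx'
  have hNb : ∀ x, G.Adj b x → x = a ∨ x = c := by
    have hsub : ({a, c} : Finset V) ⊆ G.neighborFinset b := by
      intro x hx
      rw [Finset.mem_insert, Finset.mem_singleton] at hx
      rcases hx with rfl | rfl
      · rw [SimpleGraph.mem_neighborFinset]; exact hab.symm
      · rw [SimpleGraph.mem_neighborFinset]; exact hbc
    have hle : (G.neighborFinset b).card ≤ ({a, c} : Finset V).card := by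
      rw [Finset.card_insert_of_notMem (by simpa using hac), Finset.card_singleton]
      exact le_of_eq hdegb
    have := Finset.eq_of_subset_of_card_le hsub hle
    intro x hx
    have hx' : x ∈ G.neighborFinset b := by rwa [SimpleGraph.mem_neighborFinset]
    rw [← this, Finset.mem_insert, Finset.mem_singleton] at hx'
    exact hx'
  -- one of the three tail edges is in F
  have hkey : s(a,b) ∈ F ∨ s(b,c) ∈ F ∨ s(c,d) ∈ F := by
    by_contra hcon
    push_neg at hcon
    obtain ⟨h1, h2, h3⟩ := hcon
    have e1 : (G.deleteEdges F).Adj a b := by rw [SimpleGraph.deleteEdges_adj]; exact ⟨hab, h1⟩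
    have e2 : (G.deleteEdges F).Adj b c := by rw [SimpleGraph.deleteEdges_adj]; exact ⟨hbc, h2⟩
    have e3 : (G.deleteEdges F).Adj c d := by rw [SimpleGraph.deleteEdges_adj]; exact ⟨hcd, h3⟩
    have hr : (G.deleteEdges F).Reachable a d :=
      (e1.reachable.trans e2.reachable).trans e3.reachable
    have hd := hclub a d hr
    obtain ⟨q, hq⟩ := hr.exists_walk_length_eq_dist
    match q, hq with
    | SimpleGraph.Walk.nil, hq => exact had rfl
    | SimpleGraph.Walk.cons h SimpleGraph.Walk.nil, hq =>
      exact hnad (SimpleGraph.deleteEdges_adj.mp h).1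
    | SimpleGraph.Walk.cons (v := w) h (SimpleGraph.Walk.cons h' SimpleGraph.Walk.nil), hq =>
      have hGaw : G.Adj a w := (SimpleGraph.deleteEdges_adj.mp h).1
      have hGwd : G.Adj w d := (SimpleGraph.deleteEdges_adj.mp h').1
      have : w = c := hNd w hGwd.symm
      rw [this] at hGaw
      exact hnac hGaw
    | SimpleGraph.Walk.cons h (SimpleGraph.Walk.cons h' (SimpleGraph.Walk.cons h'' q')), hq =>
      rw [SimpleGraph.Walk.length_cons, SimpleGraph.Walk.length_cons,
        SimpleGraph.Walk.length_cons] at hq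
      omega
  have hFfin : F.Finite := Set.toFinite F
  by_cases habF : s(a,b) ∈ F
  · refine ⟨F \ {s(a,b)}, ?_, ?_⟩
    · rw [Set.ncard_diff_singleton_of_mem habF]
      omega
    · rw [SimpleGraph.deleteEdges_deleteEdges,
        Set.union_diff_cancel (by simpa using habF)]
      exact hclub
  · have he : s(b,c) ∈ F ∨ s(c,d) ∈ F := by tauto
    rcases he with heF | heF
    · refine ⟨F \ {s(b,c)}, ?_, ?_⟩
      · rw [Set.ncard_diff_singleton_of_mem heF]
        omega
      · exact threeTail_main_aux G a b c d F s(b,c) hNb hNc hNd heF (Or.inl rfl) hclub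
    · refine ⟨F \ {s(c,d)}, ?_, ?_⟩
      · rw [Set.ncard_diff_singleton_of_mem heF]
        omega
      · exact threeTail_main_aux G a b c d F s(c,d) hNb hNc hNd heF (Or.inr rfl) hclub
end

section
/- Let (a,b,c) be an induced path of length two in G and let F be an edge-deletion set making G a disjoint union of 2-clubs with ab ∉ F and bc ∉ F. Then F contains, for every vertex u ∈ N(a) with dist_G(u,c) = 3, the edge au, and for every vertex w ∈ N(c) with dist_G(w,a) = 3, the edge cw. -/
lemma dist_le_of_le {V : Type*} {G G' : SimpleGraph V} (h : G' ≤ G) {u v : V}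
    (hr : G'.Reachable u v) : G.dist u v ≤ G'.dist u v := by
  obtain ⟨p, hp⟩ := hr.exists_walk_length_eq_dist
  calc G.dist u v ≤ (p.mapLe h).length := SimpleGraph.dist_le _
    _ = G'.dist u v := by simp [SimpleGraph.Walk.mapLe, hp]

/-- if the two edges of an induced P₂ (a,b,c) survive, then all
edges from a to neighbors at distance 3 from c (and symmetrically from c)
must be deleted. -/
theorem inducedP2_forced_deletions {V : Type*} (G : SimpleGraph V)
    (a b c : V) (hab : G.Adj a b) (hbc : G.Adj b c) (hnac : ¬ G.Adj a c)
    (hac : a ≠ c) (F : Set (Sym2 V)) (hF : IsTwoClubCluster (G.deleteEdges F))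
    (habF : s(a, b) ∉ F) (hbcF : s(b, c) ∉ F) :
    (∀ u : V, G.Adj a u → G.dist u c = 3 → s(a, u) ∈ F) ∧
      (∀ w : V, G.Adj c w → G.dist w a = 3 → s(c, w) ∈ F) := by
  set G' := G.deleteEdges F with hG'
  have hab' : G'.Adj a b := by simp [hG', SimpleGraph.deleteEdges_adj, hab, habF]
  have hbc' : G'.Adj b c := by simp [hG', SimpleGraph.deleteEdges_adj, hbc, hbcF]
  have hle : G' ≤ G := SimpleGraph.deleteEdges_le F
  constructor
  · intro u hau hd3
    by_contra hauF
    have hau' : G'.Adj a u := by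
      simp [hG', SimpleGraph.deleteEdges_adj, hau, hauF]
    have hr : G'.Reachable u c :=
      ⟨(hau'.symm.toWalk.append hab'.toWalk).append hbc'.toWalk⟩
    have h1 := hF u c hr
    have h2 := dist_le_of_le hle hr
    omega
  · intro w hcw hd3
    by_contra hcwF
    have hcw' : G'.Adj c w := by
      simp [hG', SimpleGraph.deleteEdges_adj, hcw, hcwF]
    have hr : G'.Reachable w a :=
      ⟨(hcw'.symm.toWalk.append hbc'.symm.toWalk).append hab'.symm.toWalk⟩
    have h1 := hF w a hr
    have h2 := dist_le_of_le hle hr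
    omega
end

section
/- Let (a,b,c,d) be a conflict quadruple in G and let w be a common neighbor of b and d (edges bw and dw exist). If F is an edge-deletion set making G a disjoint union of 2-clubs with ab ∉ F, then at least two edges among {bc, bw, cd, dw} belong to F; more precisely one of the following holds: {bc,bw} ⊆ F, {cd,dw} ⊆ F, {bc,dw} ⊆ F, or {cd,bw} ⊆ F. -/
lemma dist_le_of_deleteEdges {V : Type*} (G : SimpleGraph V) (F : Set (Sym2 V))
    {a d : V} (h : (G.deleteEdges F).Reachable a d) :
    G.dist a d ≤ (G.deleteEdges F).dist a d := by
  obtain ⟨p, hp⟩ := h.exists_walk_length_eq_dist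
  calc G.dist a d ≤ (p.mapLe (SimpleGraph.deleteEdges_le F)).length :=
        SimpleGraph.dist_le _
    _ = (G.deleteEdges F).dist a d := by simpa using hp

/-- conflict quadruple (a,b,c,d) with a common neighbor w of b
and d; if ab survives, then one of the four indicated pairs is deleted. -/
theorem case3_branching {V : Type*} (G : SimpleGraph V) (a b c d w : V)
    (hab : G.Adj a b) (hbc : G.Adj b c) (hcd : G.Adj c d)
    (hdist : G.dist a d = 3)
    (hbw : G.Adj b w) (hdw : G.Adj d w)
    (hwa : w ≠ a) (hwb : w ≠ b) (hwc : w ≠ c) (hwd : w ≠ d)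
    (F : Set (Sym2 V)) (hF : IsTwoClubCluster (G.deleteEdges F))
    (habF : s(a, b) ∉ F) :
    (s(b, c) ∈ F ∧ s(b, w) ∈ F) ∨ (s(c, d) ∈ F ∧ s(d, w) ∈ F) ∨
      (s(b, c) ∈ F ∧ s(d, w) ∈ F) ∨ (s(c, d) ∈ F ∧ s(b, w) ∈ F) := by
  have hab' : (G.deleteEdges F).Adj a b := by
    rw [SimpleGraph.deleteEdges_adj]; exact ⟨hab, habF⟩
  have key : ∀ {x : V}, (G.deleteEdges F).Adj b x → (G.deleteEdges F).Adj x d → False := by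
    intro x h1 h2
    have hr : (G.deleteEdges F).Reachable a d :=
      ⟨SimpleGraph.Walk.cons hab' (SimpleGraph.Walk.cons h1
        (SimpleGraph.Walk.cons h2 SimpleGraph.Walk.nil))⟩
    have := (dist_le_of_deleteEdges G F hr).trans (hF a d hr)
    omega
  have h1 : s(b, c) ∈ F ∨ s(c, d) ∈ F := by
    by_contra hc
    push_neg at hc
    exact key (by rw [SimpleGraph.deleteEdges_adj]; exact ⟨hbc, hc.1⟩)
      (by rw [SimpleGraph.deleteEdges_adj]
          exact ⟨hcd, hc.2⟩)
  have h2 : s(b, w) ∈ F ∨ s(d, w) ∈ F := by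
    by_contra hc
    push_neg at hc
    exact key (by rw [SimpleGraph.deleteEdges_adj]; exact ⟨hbw, hc.1⟩)
      (by rw [SimpleGraph.deleteEdges_adj]
          exact ⟨hdw.symm, by rw [Sym2.eq_swap]; exact hc.2⟩)
  rcases h1 with h1 | h1 <;> rcases h2 with h2 | h2 <;> tauto
end

section
/- Let (a,b,c,d) be a conflict quadruple in G, and suppose b has a neighbor x and there is a vertex y adjacent to x and d, with (b,x,y,d) an induced path, and dist_G(a,y) = 3. If F makes G a disjoint union of 2-clubs with ab ∉ F, then one of the following holds: {bc,bx} ⊆ F, {cd,xy} ⊆ F, {bx,cd} ⊆ F, or {bc,xy} ⊆ F. -/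
lemma dist_le_two_of_reachable {V : Type*} (G : SimpleGraph V) (F : Set (Sym2 V))
    (hF : IsTwoClubCluster (G.deleteEdges F)) {u v : V}
    (h : (G.deleteEdges F).Reachable u v) : G.dist u v ≤ 2 := by
  obtain ⟨p, hp⟩ := h.exists_walk_length_eq_dist
  have h1 : G.dist u v ≤ p.length := by
    have := SimpleGraph.dist_le (p.mapLe (SimpleGraph.deleteEdges_le F))
    simpa using this
  calc G.dist u v ≤ p.length := h1
    _ = (G.deleteEdges F).dist u v := hp
    _ ≤ 2 := hF u v h

/-- Case 4.1 branching. Conflict quadruple (a,b,c,d), induced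
path (b,x,y,d), dist(a,y)=3; if ab survives, one of four pairs is deleted. -/
theorem case41_branching {V : Type*} (G : SimpleGraph V) (a b c d x y : V)
    (hab : G.Adj a b) (hbc : G.Adj b c) (hcd : G.Adj c d)
    (hdist : G.dist a d = 3)
    (hbx : G.Adj b x) (hxy : G.Adj x y) (hyd : G.Adj y d)
    (hnbd : ¬ G.Adj b d) (hnby : ¬ G.Adj b y) (hnxd : ¬ G.Adj x d)
    (hay : G.dist a y = 3)
    (F : Set (Sym2 V)) (hF : IsTwoClubCluster (G.deleteEdges F))
    (habF : s(a, b) ∉ F) :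
    (s(b, c) ∈ F ∧ s(b, x) ∈ F) ∨ (s(c, d) ∈ F ∧ s(x, y) ∈ F) ∨
      (s(b, x) ∈ F ∧ s(c, d) ∈ F) ∨ (s(b, c) ∈ F ∧ s(x, y) ∈ F) := by
  have hab' : (G.deleteEdges F).Adj a b :=
    SimpleGraph.deleteEdges_adj.2 ⟨hab, habF⟩
  have had : ¬ (G.deleteEdges F).Reachable a d := fun h => by
    have := dist_le_two_of_reachable G F hF h
    omega
  have hay' : ¬ (G.deleteEdges F).Reachable a y := fun h => by
    have := dist_le_two_of_reachable G F hF h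
    omega
  have hbd : ¬ (G.deleteEdges F).Reachable b d := fun h =>
    had (hab'.reachable.trans h)
  have hby : ¬ (G.deleteEdges F).Reachable b y := fun h =>
    hay' (hab'.reachable.trans h)
  have h1 : s(b, c) ∈ F ∨ s(c, d) ∈ F := by
    by_contra h
    push_neg at h
    exact hbd ((SimpleGraph.deleteEdges_adj.2 ⟨hbc, h.1⟩).reachable.trans
      (SimpleGraph.deleteEdges_adj.2 ⟨hcd, h.2⟩).reachable)
  have h2 : s(b, x) ∈ F ∨ s(x, y) ∈ F := by
    by_contra h
    push_neg at h
    exact hby ((SimpleGraph.deleteEdges_adj.2 ⟨hbx, h.1⟩).reachable.trans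
      (SimpleGraph.deleteEdges_adj.2 ⟨hxy, h.2⟩).reachable)
  tauto
end

section
/- Let (a,b,c,d) be a conflict quadruple in G where both internal vertices b and c have degree exactly 2 in G. Then every neighbor of a (other than b) is at distance exactly 3 from c, and every neighbor of d (other than c) is at distance exactly 3 from b. -/
namespace SimpleGraph

variable {V : Type*} {G : SimpleGraph V} {a b c d u v x y z : V}

lemma two_lt_edist_of_two_lt_dist (h : 2 < G.dist u v) : 2 < G.edist u v :=
  (Nat.cast_lt.mpr h).trans_le (ENat.natCast_toNat_le_self _)

lemma Walk.dist_eq_length_of_length_le_edist (p : G.Walk u v) (hp : p.length ≤ G.edist u v) :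
    G.dist u v = p.length := by
  rw [dist, le_antisymm (G.edist_le p) hp, ENat.toNat_natCast]

lemma eq_or_eq_of_adj_of_degree_eq_two [Fintype (G.neighborSet v)] (hdeg : G.degree v = 2)
    (hx : G.Adj v x) (hy : G.Adj v y) (hxy : x ≠ y) (hz : G.Adj v z) : z = x ∨ z = y := by
  classical
  have hsub : {x, y} ⊆ G.neighborFinset v := by simp [Finset.insert_subset_iff, hx, hy]
  have hnbr : G.neighborFinset v = {x, y} := (Finset.eq_of_subset_of_card_le hsub <| by
    rw [card_neighborFinset_eq_degree, hdeg, Finset.card_pair hxy]).symm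
  simpa [hnbr] using (G.mem_neighborFinset v z).mpr hz

/-- Since `a` and `d` are at distance `> 2`, the path `u - a - b - c` cannot be shortcut:
the only neighbours of `b` and `c` lie on the path `a - b - c - d`. -/
theorem dist_eq_three_of_adj_of_degree_eq_two [Fintype (G.neighborSet b)]
    [Fintype (G.neighborSet c)] (hab : G.Adj a b) (hbc : G.Adj b c) (hcd : G.Adj c d)
    (had : 2 < G.edist a d) (hb : G.degree b = 2) (hc : G.degree c = 2)
    (hau : G.Adj a u) (hub : u ≠ b) : G.dist u c = 3 := by
  obtain ⟨-, hnad, hcommon⟩ := two_lt_edist_iff.mp had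
  have not_common : ∀ x, G.Adj a x → ¬ G.Adj x d := fun x hax hxd => by
    simpa [hcommon] using G.mem_commonNeighbors.mpr ⟨hax, hxd.symm⟩
  have hac : a ≠ c := by rintro rfl; exact hnad hcd
  have hbd : b ≠ d := by rintro rfl; exact hnad hab
  have nbr_b := fun z => eq_or_eq_of_adj_of_degree_eq_two (z := z) hb hab.symm hbc hac
  have nbr_c := fun z => eq_or_eq_of_adj_of_degree_eq_two (z := z) hc hbc.symm hcd hbd
  have huc : u ≠ c := by rintro rfl; exact not_common u hau hcd
  have hud : u ≠ d := by rintro rfl; exact hnad hau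
  refine (Walk.cons hau.symm (.cons hab (.cons hbc .nil))).dist_eq_length_of_length_le_edist
    (Order.add_one_le_of_lt (two_lt_edist_iff.mpr ⟨huc, fun huc' => ?_, ?_⟩))
  · exact (nbr_c u huc'.symm).elim hub hud
  · refine Set.eq_empty_iff_forall_notMem.mpr fun x hx => ?_
    obtain ⟨hux, hcx⟩ := G.mem_commonNeighbors.mp hx
    rcases nbr_c x hcx with rfl | rfl
    · rcases nbr_b u hux.symm with rfl | rfl
      · exact G.irrefl hau
      · exact huc rfl
    · exact not_common u hau hux

end SimpleGraph

open SimpleGraph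

/-- in a conflict quadruple (a,b,c,d) with degree-two internal
vertices, every other neighbor of a is at distance exactly 3 from c, and
every other neighbor of d is at distance exactly 3 from b. -/
theorem conflict_quadruple_degreeTwo_internal {V : Type*} [Fintype V]
    (G : SimpleGraph V) [DecidableRel G.Adj] (a b c d : V)
    (hab : G.Adj a b) (hbc : G.Adj b c) (hcd : G.Adj c d)
    (hdist : G.dist a d = 3)
    (hdegb : G.degree b = 2) (hdegc : G.degree c = 2) :
    (∀ u : V, G.Adj a u → u ≠ b → G.dist u c = 3) ∧
      (∀ w : V, G.Adj d w → w ≠ c → G.dist w b = 3) := by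
  have had : 2 < G.edist a d := two_lt_edist_of_two_lt_dist (by omega)
  exact ⟨fun _ => dist_eq_three_of_adj_of_degree_eq_two hab hbc hcd had hdegb hdegc,
    fun _ => dist_eq_three_of_adj_of_degree_eq_two hcd.symm hbc.symm hab.symm
      (by rwa [edist_comm]) hdegc hdegb⟩
end
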